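/- Let m, n ≥ 1, let Ξ ⊆ ℝ^m be an open convex set, and let r : ℝ^m → ℝ^n be twice continuously differentiable on Ξ. Suppose there are constants σ_m > 0 and S ≥ 0 such that ‖Dr(ξ)u‖ ≥ σ_m‖u‖ for all ξ ∈ Ξ and u ∈ ℝ^m, and ‖D²r_i(ξ)‖ ≤ S for every component i = 1,…,n and all ξ ∈ Ξ. Then for every constant spacing h > 0, every ξ ∈ Ξ and every unit vector s ∈ ℝ^m such that η = ξ + (h / ‖Dr(ξ)s‖) s lies in Ξ, the relative spacing error satisfies |h − ‖r(η) − r(ξ)‖| / h ≤ (√n / 2) · (S / σ_m²) · h; in particular, the relative spacing error tends to 0 linearly as h → 0. -/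

import Mathlib

/-!
Along the segment `t ↦ r(ξ + t v)`, `v = α s`, the second-order Taylor remainder of `r` is at most
half a bound on the second directional derivative `D²r(x)[v, v]`. Each of its `n` components is
at most `S ‖v‖²`, so its Euclidean norm is at most `√n S ‖v‖²`. Since `‖Dr(ξ) v‖ = h` by the choice
of `α`, the reverse triangle inequality bounds the spacing error by the remainder, and
`‖v‖ = α ≤ h / σ_m` finishes.
-/

open Set

theorem norm_sub_sub_smul_deriv_le_of_norm_deriv_deriv_le {E : Type*} [NormedAddCommGroup E]
    [NormedSpace ℝ E] {φ φ' φ'' : ℝ → E} {a b C : ℝ} (hab : a ≤ b)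
    (hφ : ∀ t ∈ Icc a b, HasDerivAt φ (φ' t) t)
    (hφ' : ∀ t ∈ Icc a b, HasDerivAt φ' (φ'' t) t)
    (hC : ∀ t ∈ Icc a b, ‖φ'' t‖ ≤ C) :
    ‖φ b - φ a - (b - a) • φ' a‖ ≤ C * (b - a) ^ 2 / 2 := by
  have hφ'_lip : ∀ t ∈ Icc a b, ‖φ' t - φ' a‖ ≤ C * (t - a) :=
    norm_image_sub_le_of_norm_deriv_le_segment' (fun t ht => (hφ' t ht).hasDerivWithinAt)
      (fun t ht => hC t (Ico_subset_Icc_self ht))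
  have hrem : ∀ t ∈ Icc a b,
      HasDerivAt (fun t => φ t - φ a - (t - a) • φ' a) (φ' t - φ' a) t := fun t ht => by
    simpa using ((hφ t ht).sub_const (φ a)).fun_sub
      (((hasDerivAt_id' t).sub_const a).smul_const (φ' a))
  have hbound : ∀ t, HasDerivAt (fun t => C * (t - a) ^ 2 / 2) (C * (t - a)) t := fun t =>
    ((((hasDerivAt_id' t).sub_const a).fun_pow 2).const_mul C).div_const 2
      |>.congr_deriv (by push_cast; ring)
  simpa using image_norm_le_of_norm_deriv_right_le_deriv_boundary
    (fun t ht => (hrem t ht).continuousAt.continuousWithinAt)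
    (fun t ht => (hrem t (Ico_subset_Icc_self ht)).hasDerivWithinAt)
    (by simp) hbound (fun t ht => hφ'_lip t (Ico_subset_Icc_self ht)) (right_mem_Icc.2 hab)

theorem norm_sub_sub_fderiv_le_of_norm_iteratedFDeriv_two_apply_le {E F : Type*}
    [NormedAddCommGroup E] [NormedSpace ℝ E] [NormedAddCommGroup F] [NormedSpace ℝ F]
    {f : E → F} {x v : E} {C : ℝ}
    (hf : ∀ y ∈ segment ℝ x (x + v), ContDiffAt ℝ 2 f y)
    (hC : ∀ y ∈ segment ℝ x (x + v), ‖iteratedFDeriv ℝ 2 f y ![v, v]‖ ≤ C) :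
    ‖f (x + v) - f x - fderiv ℝ f x v‖ ≤ C / 2 := by
  have hseg : ∀ t ∈ Icc (0 : ℝ) 1, x + t • v ∈ segment ℝ x (x + v) := fun t ht => by
    rw [segment_eq_image']
    exact ⟨t, ht, by simp⟩
  have hline : ∀ t : ℝ, HasDerivAt (fun t : ℝ => x + t • v) v t := fun t => by
    simpa using ((hasDerivAt_id t).smul_const v).const_add x
  have hφ : ∀ t ∈ Icc (0 : ℝ) 1,
      HasDerivAt (fun t => f (x + t • v)) (fderiv ℝ f (x + t • v) v) t := fun t ht =>
    ((hf _ (hseg t ht)).differentiableAt two_ne_zero).hasFDerivAt.comp_hasDerivAt t (hline t)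
  have hφ' : ∀ t ∈ Icc (0 : ℝ) 1, HasDerivAt (fun t => fderiv ℝ f (x + t • v) v)
      (fderiv ℝ (fderiv ℝ f) (x + t • v) v v) t := fun t ht => by
    have hDf : DifferentiableAt ℝ (fderiv ℝ f) (x + t • v) :=
      ((hf _ (hseg t ht)).fderiv_right (m := 1) (by norm_num)).differentiableAt one_ne_zero
    have hDfγ : HasDerivAt (fun t => fderiv ℝ f (x + t • v))
        (fderiv ℝ (fderiv ℝ f) (x + t • v) v) t :=
      hDf.hasFDerivAt.comp_hasDerivAt t (hline t)
    simpa using hDfγ.clm_apply (hasDerivAt_const t v)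
  have hφ'' : ∀ t ∈ Icc (0 : ℝ) 1, ‖fderiv ℝ (fderiv ℝ f) (x + t • v) v v‖ ≤ C := fun t ht => by
    simpa [iteratedFDeriv_two_apply] using hC _ (hseg t ht)
  simpa using norm_sub_sub_smul_deriv_le_of_norm_deriv_deriv_le zero_le_one hφ hφ' hφ''

theorem EuclideanSpace.norm_le_sqrt_card_mul {ι : Type*} [Fintype ι] {x : EuclideanSpace ℝ ι}
    {c : ℝ} (hc : 0 ≤ c) (hx : ∀ i, |x i| ≤ c) : ‖x‖ ≤ √(Fintype.card ι) * c := by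
  calc ‖x‖ = √(∑ i, ‖x i‖ ^ 2) := EuclideanSpace.norm_eq x
    _ ≤ √(∑ _i : ι, c ^ 2) := by
      gcongr with i
      exact hx i
    _ = √(Fintype.card ι) * c := by
      rw [Finset.sum_const, Finset.card_univ, nsmul_eq_mul,
        Real.sqrt_mul (Nat.cast_nonneg _), Real.sqrt_sq hc]

theorem norm_iteratedFDeriv_two_apply_le_sqrt_card_mul {E ι : Type*} [NormedAddCommGroup E]
    [NormedSpace ℝ E] [Fintype ι] {f : E → EuclideanSpace ℝ ι} {x v : E} {S : ℝ}
    (hf : ContDiffAt ℝ 2 f x) (hS : 0 ≤ S)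
    (hfS : ∀ i, ‖iteratedFDeriv ℝ 2 (fun y => f y i) x‖ ≤ S) :
    ‖iteratedFDeriv ℝ 2 f x ![v, v]‖ ≤ √(Fintype.card ι) * (S * ‖v‖ ^ 2) := by
  refine EuclideanSpace.norm_le_sqrt_card_mul (by positivity) fun i => ?_
  have hcomp : iteratedFDeriv ℝ 2 f x ![v, v] i
      = iteratedFDeriv ℝ 2 (fun y => f y i) x ![v, v] := by
    rw [show (fun y => f y i) = EuclideanSpace.proj i ∘ f from rfl,
      (EuclideanSpace.proj i).iteratedFDeriv_comp_left hf le_rfl]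
    rfl
  rw [hcomp, ← Real.norm_eq_abs]
  simpa [Fin.prod_univ_two, sq] using
    (iteratedFDeriv ℝ 2 (fun y => f y i) x).le_of_opNorm_le (hfS i) ![v, v]

theorem relative_spacing_error_linear_general
    (m n : ℕ)
    (Ξ : Set (EuclideanSpace ℝ (Fin m))) (hΞopen : IsOpen Ξ) (hΞconv : Convex ℝ Ξ)
    (r : EuclideanSpace ℝ (Fin m) → EuclideanSpace ℝ (Fin n))
    (hr : ContDiffOn ℝ 2 r Ξ)
    (σm S : ℝ) (hσm : 0 < σm) (hS : 0 ≤ S)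
    (hsing : ∀ ξ ∈ Ξ, ∀ u : EuclideanSpace ℝ (Fin m), σm * ‖u‖ ≤ ‖fderiv ℝ r ξ u‖)
    (hhess : ∀ i : Fin n, ∀ ξ ∈ Ξ, ‖iteratedFDeriv ℝ 2 (fun x => r x i) ξ‖ ≤ S) :
    ∀ h : ℝ, 0 < h → ∀ ξ ∈ Ξ, ∀ s : EuclideanSpace ℝ (Fin m), ‖s‖ = 1 →
      ∀ η : EuclideanSpace ℝ (Fin m),
        η = ξ + (h / ‖fderiv ℝ r ξ s‖) • s → η ∈ Ξ →
          |h - ‖r η - r ξ‖| / h ≤ Real.sqrt n / 2 * (S / σm ^ 2) * h := by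
  intro h hh ξ hξ s hs η hη hηΞ
  have hσ : σm ≤ ‖fderiv ℝ r ξ s‖ := by simpa [hs] using hsing ξ hξ s
  set α := h / ‖fderiv ℝ r ξ s‖
  have hα : 0 < α := div_pos hh (hσm.trans_le hσ)
  have hαh : α ≤ h / σm := div_le_div_of_nonneg_left hh.le hσm hσ
  have hDv : ‖fderiv ℝ r ξ (α • s)‖ = h := by
    rw [map_smul, norm_smul, Real.norm_of_nonneg hα.le, div_mul_cancel₀ _ (hσm.trans_le hσ).ne']
  have hv : ‖α • s‖ = α := by rw [norm_smul, hs, mul_one, Real.norm_of_nonneg hα.le]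
  have hseg : segment ℝ ξ (ξ + α • s) ⊆ Ξ := hΞconv.segment_subset hξ (hη ▸ hηΞ)
  have hrC : ∀ y ∈ Ξ, ContDiffAt ℝ 2 r y := fun y hy => hr.contDiffAt (hΞopen.mem_nhds hy)
  have htaylor := norm_sub_sub_fderiv_le_of_norm_iteratedFDeriv_two_apply_le
    (fun y hy => hrC y (hseg hy)) fun y hy =>
      norm_iteratedFDeriv_two_apply_le_sqrt_card_mul (hrC y (hseg hy)) hS
        fun i => hhess i y (hseg hy)
  rw [← hη, hv, Fintype.card_fin] at htaylor
  rw [div_le_iff₀ hh]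
  calc |h - ‖r η - r ξ‖| = |‖fderiv ℝ r ξ (α • s)‖ - ‖r η - r ξ‖| := by rw [hDv]
    _ ≤ ‖r η - r ξ - fderiv ℝ r ξ (α • s)‖ :=
      (abs_norm_sub_norm_le _ _).trans_eq (norm_sub_rev _ _)
    _ ≤ √n * (S * α ^ 2) / 2 := htaylor
    _ ≤ √n * (S * (h / σm) ^ 2) / 2 := by gcongr
    _ = √n / 2 * (S / σm ^ 2) * h * h := by field_simp

/-- The 'in particular' consequence of Proposition 2.1: for constant spacing `h > 0`, the
relative spacing error is bounded by `(√n / 2) · (S / σ_m²) · h`, i.e., it decreases linearly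
with `h`. -/
theorem relative_spacing_error_linear
    (m n : ℕ) (hm : 1 ≤ m) (hn : 1 ≤ n)
    (Ξ : Set (EuclideanSpace ℝ (Fin m))) (hΞopen : IsOpen Ξ) (hΞconv : Convex ℝ Ξ)
    (r : EuclideanSpace ℝ (Fin m) → EuclideanSpace ℝ (Fin n))
    (hr : ContDiffOn ℝ 2 r Ξ)
    (σm S : ℝ) (hσm : 0 < σm) (hS : 0 ≤ S)
    (hsing : ∀ ξ ∈ Ξ, ∀ u : EuclideanSpace ℝ (Fin m), σm * ‖u‖ ≤ ‖fderiv ℝ r ξ u‖)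
    (hhess : ∀ i : Fin n, ∀ ξ ∈ Ξ, ‖iteratedFDeriv ℝ 2 (fun x => r x i) ξ‖ ≤ S) :
    ∀ h : ℝ, 0 < h → ∀ ξ ∈ Ξ, ∀ s : EuclideanSpace ℝ (Fin m), ‖s‖ = 1 →
      ∀ η : EuclideanSpace ℝ (Fin m),
        η = ξ + (h / ‖fderiv ℝ r ξ s‖) • s → η ∈ Ξ →
          |h - ‖r η - r ξ‖| / h ≤ Real.sqrt n / 2 * (S / σm ^ 2) * h :=
  relative_spacing_error_linear_general m n Ξ hΞopen hΞconv r hr σm S hσm hS hsing hhess
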